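/- arXiv:1606.05298 — 3 statements merged into one kernel-verified Lean document; each statement's English description precedes it below -/
import Mathlib

section
/- Let (X,d) be a b-metric space with constant b ≥ 1 and let f : X → X be a generalized F-contraction with associated F ∈ 𝓕. Then the induced map on compact sets, A ↦ f(A) = { f(x) : x ∈ A }, is a generalized F-contraction on (H(X), H): there exists τ' ∈ Υ such that τ'(H(A,B)) + F(H(f(A),f(B))) ≤ F(H(A,B)) for all A, B ∈ H(X) with H(f(A),f(B)) > 0. -/
open Filter Topology Set

/-- A b-metric on `X` with constant `b ≥ 1`. -/
def IsBMetric {X : Type*} (b : ℝ) (d : X → X → ℝ) : Prop :=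
  (∀ x y, 0 ≤ d x y) ∧ (∀ x y, d x y = 0 ↔ x = y) ∧
  (∀ x y, d x y = d y x) ∧ (∀ x y z, d x y ≤ b * (d x z + d z y))

/-- Convergence of a sequence with respect to a b-metric `d`. -/
def BConverges {X : Type*} (d : X → X → ℝ) (x : ℕ → X) (l : X) : Prop :=
  Tendsto (fun n => d (x n) l) atTop (𝓝 0)

/-- Cauchyness of a sequence with respect to a b-metric `d`. -/
def BCauchy {X : Type*} (d : X → X → ℝ) (x : ℕ → X) : Prop :=
  ∀ ε : ℝ, 0 < ε → ∃ N : ℕ, ∀ m ≥ N, ∀ n ≥ N, d (x m) (x n) < ε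

/-- Completeness of a b-metric space. -/
def BComplete {X : Type*} (d : X → X → ℝ) : Prop :=
  ∀ x : ℕ → X, BCauchy d x → ∃ l, BConverges d x l

/-- Sequential compactness of a subset of a b-metric space. -/
def BSeqCompact {X : Type*} (d : X → X → ℝ) (A : Set X) : Prop :=
  ∀ x : ℕ → X, (∀ n, x n ∈ A) →
    ∃ a ∈ A, ∃ φ : ℕ → ℕ, StrictMono φ ∧ BConverges d (x ∘ φ) a

/-- `HX d` is the collection of nonempty compact subsets of `X`. -/
def HX {X : Type*} (d : X → X → ℝ) : Set (Set X) :=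
  {A | A.Nonempty ∧ BSeqCompact d A}

/-- Distance from a point to a set: `d(x,B) = inf_{y ∈ B} d(x,y)`. -/
noncomputable def distPtSet {X : Type*} (d : X → X → ℝ) (x : X) (B : Set X) : ℝ :=
  sInf (d x '' B)

/-- The Pompeiu–Hausdorff distance induced by `d`. -/
noncomputable def hausD {X : Type*} (d : X → X → ℝ) (A B : Set X) : ℝ :=
  max (sSup ((fun a => distPtSet d a B) '' A))
    (sSup ((fun y => distPtSet d y A) '' B))

/-- The class `𝓕` of Wardowski functions: continuous and strictly increasing on `(0,∞)`,
satisfying (F2) and (F3). -/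
def MemF (F : ℝ → ℝ) : Prop :=
  ContinuousOn F (Ioi 0) ∧ StrictMonoOn F (Ioi 0) ∧
  (∀ α : ℕ → ℝ, (∀ n, 0 < α n) →
    (Tendsto α atTop (𝓝 0) ↔ Tendsto (fun n => F (α n)) atTop atBot)) ∧
  (∃ h ∈ Ioo (0:ℝ) 1, Tendsto (fun t : ℝ => t ^ h * F t) (𝓝[>] 0) (𝓝 0))

/-- The class `Υ`: positive on `(0,∞)` with `liminf_{t → s} τ(t) > 0` for every `s ≥ 0`,
the limit being taken within the domain `(0,∞)`. -/
def MemUpsilon (τ : ℝ → ℝ) : Prop :=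
  (∀ t : ℝ, 0 < t → 0 < τ t) ∧
  (∀ s : ℝ, 0 ≤ s → 0 < liminf τ (𝓝[Set.Ioi (0:ℝ)] s))

/-- A generalized F-contraction on a b-metric space. -/
def GenFContraction {X : Type*} (d : X → X → ℝ) (f : X → X) (F τ : ℝ → ℝ) : Prop :=
  ∀ x y, 0 < d (f x) (f y) → τ (d x y) + F (d (f x) (f y)) ≤ F (d x y)


noncomputable def psiF (F τ : ℝ → ℝ) (u : ℝ) : ℝ := sSup {s | 0 < s ∧ F s ≤ F u - τ u}
noncomputable def MFun (F τ : ℝ → ℝ) (t : ℝ) : ℝ := sSup (psiF F τ '' Ioc 0 t)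
noncomputable def MplusF (F τ : ℝ → ℝ) (t : ℝ) : ℝ := sInf (MFun F τ '' Ioi t)
open scoped Classical in
noncomputable def tauP (F τ : ℝ → ℝ) (t : ℝ) : ℝ :=
  if 0 < t ∧ 0 < MplusF F τ t then min 1 (F t - F (MplusF F τ t)) else 1

section FLemmas
variable {F τ : ℝ → ℝ}

lemma psiF_nonneg (u : ℝ) : 0 ≤ psiF F τ u := by
  unfold psiF
  rcases Set.eq_empty_or_nonempty {s | 0 < s ∧ F s ≤ F u - τ u} with h | h
  · rw [h, Real.sSup_empty]
  · by_cases hb : BddAbove {s | 0 < s ∧ F s ≤ F u - τ u}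
    · obtain ⟨s, hs⟩ := h
      exact le_trans hs.1.le (le_csSup hb hs)
    · rw [Real.sSup_of_not_bddAbove hb]

lemma psiF_le (hF : MemF F) (hτ : MemUpsilon τ) {u : ℝ} (hu : 0 < u) : psiF F τ u ≤ u := by
  apply Real.sSup_le _ hu.le
  intro x hx
  by_contra hxu
  push_neg at hxu
  have : F u ≤ F x := hF.2.1.monotoneOn (mem_Ioi.2 hu) (mem_Ioi.2 hx.1) hxu.le
  linarith [hx.2, hτ.1 u hu]

lemma MFun_le {t w : ℝ} (hw : 0 ≤ w)
    (h : ∀ u ∈ Ioc (0:ℝ) t, psiF F τ u ≤ w) : MFun F τ t ≤ w := by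
  apply Real.sSup_le _ hw
  rintro x ⟨u, hu, rfl⟩
  exact h u hu

lemma MFun_nonneg (hF : MemF F) (hτ : MemUpsilon τ) {t : ℝ} (ht : 0 < t) : 0 ≤ MFun F τ t := by
  have hb : BddAbove (psiF F τ '' Ioc 0 t) := by
    refine ⟨t, ?_⟩
    rintro x ⟨u, hu, rfl⟩
    exact (psiF_le hF hτ hu.1).trans hu.2
  exact le_trans (psiF_nonneg t) (le_csSup hb ⟨t, ⟨ht, le_refl t⟩, rfl⟩)

lemma MplusF_nonneg (hF : MemF F) (hτ : MemUpsilon τ) {t : ℝ} (ht : 0 < t) :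
    0 ≤ MplusF F τ t := by
  apply le_csInf
  · exact ⟨MFun F τ (t+1), ⟨t+1, by simp [ht, lt_add_one], rfl⟩⟩
  · rintro x ⟨u, hu, rfl⟩
    exact MFun_nonneg hF hτ (ht.trans hu)

lemma MplusF_le_MFun (hF : MemF F) (hτ : MemUpsilon τ) {t t' : ℝ} (ht : 0 < t) (htt' : t < t') :
    MplusF F τ t ≤ MFun F τ t' := by
  have hbdd : BddBelow (MFun F τ '' Ioi t) := by
    refine ⟨0, ?_⟩
    rintro x ⟨u, hu, rfl⟩
    exact MFun_nonneg hF hτ (ht.trans hu)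
  exact csInf_le hbdd ⟨t', htt', rfl⟩

/-- Key analytic lemma. -/
lemma key (hF : MemF F) (hτ : MemUpsilon τ) {t c δ₀ θ : ℝ} (ht : 0 < t) (hc : 0 < c)
    (hδ₀ : 0 < δ₀) (hθ : θ < t)
    (hτc : ∀ u, 0 < u → θ < u → u < t + δ₀ → c ≤ τ u) :
    ∃ w, 0 < w ∧ w < t ∧ F w ≤ F t - c/2 ∧ MplusF F τ t ≤ max θ w := by
  -- right continuity: get δ₁
  have hcont : ContinuousWithinAt F (Ioi 0) t := hF.1 t (mem_Ioi.2 ht)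
  have hev : ∀ᶠ u in 𝓝[Ioi 0] t, |F u - F t| < c/4 := by
    have h4 : (0:ℝ) < c/4 := by linarith
    have := Metric.tendsto_nhds.mp hcont.tendsto (c/4) h4
    simpa [Real.dist_eq] using this
  rw [eventually_nhdsWithin_iff, Metric.eventually_nhds_iff] at hev
  obtain ⟨δ₁, hδ₁, hδ₁p⟩ := hev
  set δ := min δ₁ δ₀ / 2 with hδdef
  have hδpos : 0 < δ := by positivity
  have hδltδ₁ : δ < δ₁ := by
    have : min δ₁ δ₀ ≤ δ₁ := min_le_left _ _
    simp only [hδdef]; linarith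
  have hδltδ₀ : δ < δ₀ := by
    have : min δ₁ δ₀ ≤ δ₀ := min_le_right _ _
    simp only [hδdef]; linarith
  -- F on (0, t+δ] is ≤ F t + c/4
  have hFle : ∀ u, 0 < u → u ≤ t + δ → F u ≤ F t + c/4 := by
    intro u hu hule
    rcases le_or_gt u t with h | h
    · have := hF.2.1.monotoneOn (mem_Ioi.2 hu) (mem_Ioi.2 ht) h
      linarith
    · have hd : dist u t < δ₁ := by
        rw [Real.dist_eq, abs_of_nonneg (by linarith)]
        linarith
      have := hδ₁p hd (mem_Ioi.2 hu)
      have := abs_lt.mp this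
      linarith [this.1, this.2]
  -- find a ∈ (0,t) with F a < F t - 3c/4
  obtain ⟨a, ha0, hat, hFa⟩ : ∃ a, 0 < a ∧ a < t ∧ F a < F t - 3*c/4 := by
    have hpos : ∀ n : ℕ, 0 < t/2 * (1/((n:ℝ)+1)) := fun n => by positivity
    have htend : Tendsto (fun n : ℕ => t/2 * (1/((n:ℝ)+1))) atTop (𝓝 0) := by
      have h1 := tendsto_one_div_add_atTop_nhds_zero_nat.const_mul (t/2)
      simpa using h1
    have hbot := (hF.2.2.1 (fun n : ℕ => t/2 * (1/((n:ℝ)+1))) hpos).mp htend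
    have := (hbot.eventually (eventually_lt_atBot (F t - 3*c/4))).exists
    obtain ⟨n, hn⟩ := this
    refine ⟨t/2 * (1/((n:ℝ)+1)), hpos n, ?_, hn⟩
    have h1 : (1:ℝ)/((n:ℝ)+1) ≤ 1 := by
      rw [div_le_one (by positivity)]; linarith [Nat.cast_nonneg (α := ℝ) n]
    nlinarith
  -- IVT
  obtain ⟨w, hwmem, hFw⟩ : ∃ w ∈ Icc a t, F w = F t - 3*c/4 := by
    have hsub : Icc a t ⊆ Ioi 0 := fun x hx => lt_of_lt_of_le ha0 hx.1
    have := intermediate_value_Icc hat.le (hF.1.mono hsub)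
    have hmem : F t - 3*c/4 ∈ Icc (F a) (F t) := ⟨hFa.le, by linarith⟩
    obtain ⟨w, hw, hw2⟩ := this hmem
    exact ⟨w, hw, hw2⟩
  have hw0 : 0 < w := lt_of_lt_of_le ha0 hwmem.1
  have hwt : w < t := by
    rcases lt_or_eq_of_le hwmem.2 with h | h
    · exact h
    · exfalso; rw [h] at hFw; linarith
  refine ⟨w, hw0, hwt, by linarith, ?_⟩
  have hstep : MFun F τ (t+δ) ≤ max θ w := by
    apply MFun_le (le_trans hw0.le (le_max_right _ _))
    intro u hu
    rcases le_or_gt u θ with h | h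
    · exact le_trans (le_trans (psiF_le hF hτ hu.1) h) (le_max_left _ _)
    · have hτu : c ≤ τ u := hτc u hu.1 h (lt_of_le_of_lt hu.2 (by linarith))
      refine le_trans ?_ (le_max_right _ _)
      apply Real.sSup_le _ hw0.le
      intro s hs
      by_contra hws
      push_neg at hws
      have hFws : F w < F s := hF.2.1 (mem_Ioi.2 hw0) (mem_Ioi.2 hs.1) hws
      have hFu : F u ≤ F t + c/4 := hFle u hu.1 hu.2
      have := hs.2
      rw [hFw] at hFws
      linarith
  exact le_trans (MplusF_le_MFun hF hτ ht (by linarith)) hstep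

lemma tauP_le_one (t : ℝ) : tauP F τ t ≤ 1 := by
  unfold tauP; split
  · exact min_le_left _ _
  · exact le_refl 1

lemma liminf_pos_extract {l : Filter ℝ} {g : ℝ → ℝ} (h : 0 < liminf g l) :
    ∃ c, 0 < c ∧ ∀ᶠ x in l, c ≤ g x := by
  rw [Filter.liminf_eq] at h
  set S := {a | ∀ᶠ n in l, a ≤ g n} with hS
  rcases Set.eq_empty_or_nonempty S with hE | hN
  · rw [hE, Real.sSup_empty] at h; exact absurd h (lt_irrefl 0)
  by_cases hb : BddAbove S
  · obtain ⟨c, hcS, hc0⟩ := exists_lt_of_lt_csSup hN h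
    exact ⟨c, hc0, hcS⟩
  · obtain ⟨c, hcS, hc0⟩ := (not_bddAbove_iff.mp hb) 0
    exact ⟨c, hc0, hcS⟩

lemma band_of_liminf (hτ : MemUpsilon τ) {s : ℝ} (hs : 0 ≤ s) :
    ∃ c, 0 < c ∧ ∃ η, 0 < η ∧ ∀ u, 0 < u → |u - s| < η → c ≤ τ u := by
  obtain ⟨c, hc0, hev⟩ := liminf_pos_extract (hτ.2 s hs)
  rw [eventually_nhdsWithin_iff, Metric.eventually_nhds_iff] at hev
  obtain ⟨η, hη0, hη⟩ := hev
  refine ⟨c, hc0, η, hη0, fun u hu hus => hη ?_ (mem_Ioi.2 hu)⟩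
  rwa [Real.dist_eq]

lemma tauP_pos (hF : MemF F) (hτ : MemUpsilon τ) : ∀ t, 0 < t → 0 < tauP F τ t := by
  intro t ht
  unfold tauP
  split
  case isTrue hcond =>
    refine lt_min one_pos ?_
    obtain ⟨c, hc0, η, hη0, hband⟩ := band_of_liminf hτ ht.le
    obtain ⟨w, hw0, hwt, hFw, hMle⟩ := key hF hτ ht hc0 hη0 (show t - η < t by linarith)
      (fun u hu h1 h2 => hband u hu (abs_lt.mpr ⟨by linarith, by linarith⟩))
    have hMlt : MplusF F τ t < t := lt_of_le_of_lt hMle (max_lt (by linarith) hwt)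
    have := hF.2.1 (mem_Ioi.2 hcond.2) (mem_Ioi.2 ht) hMlt
    linarith
  case isFalse => exact one_pos

lemma FMplus_le (hF : MemF F) (hτ : MemUpsilon τ) {t c η θ ε : ℝ} (ht : 0 < t) (hc : 0 < c)
    (hη : 0 < η) (hθt : θ < t) (hM : 0 < MplusF F τ t)
    (hband : ∀ u, 0 < u → θ < u → u < t + η → c ≤ τ u)
    (hθ : 0 < θ → F θ ≤ F t - ε) (hε : ε ≤ c/2) :
    F (MplusF F τ t) ≤ F t - ε := by
  obtain ⟨w, hw0, hwt, hFw, hMle⟩ := key hF hτ ht hc hη hθt hband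
  rcases le_max_iff.mp hMle with h | h
  · have hθpos : 0 < θ := lt_of_lt_of_le hM h
    calc F (MplusF F τ t) ≤ F θ :=
          hF.2.1.monotoneOn (mem_Ioi.2 hM) (mem_Ioi.2 hθpos) h
      _ ≤ F t - ε := hθ hθpos
  · calc F (MplusF F τ t) ≤ F w := hF.2.1.monotoneOn (mem_Ioi.2 hM) (mem_Ioi.2 hw0) h
      _ ≤ F t - c/2 := hFw
      _ ≤ F t - ε := by linarith

lemma liminf_tauP_pos (hF : MemF F) (hτ : MemUpsilon τ) {s : ℝ} (hs : 0 ≤ s) :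
    0 < liminf (tauP F τ) (𝓝[Set.Ioi (0:ℝ)] s) := by
  have hNeBot : (𝓝[Set.Ioi (0:ℝ)] s).NeBot := by
    apply mem_closure_iff_nhdsWithin_neBot.mp
    rw [closure_Ioi]; exact hs
  -- find ε > 0 and eventual lower bound
  obtain ⟨c, hc0, η, hη0, hband⟩ := band_of_liminf hτ hs
  obtain ⟨ε, hε0, hεev⟩ :
      ∃ ε, 0 < ε ∧ ∀ᶠ t in 𝓝[Set.Ioi (0:ℝ)] s, ε ≤ tauP F τ t := by
    rcases eq_or_lt_of_le hs with hs0 | hs0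
    · -- s = 0
      refine ⟨min 1 (c/2), lt_min one_pos (by linarith), ?_⟩
      rw [eventually_nhdsWithin_iff, Metric.eventually_nhds_iff]
      refine ⟨η/2, by linarith, fun t hts htpos => ?_⟩
      rw [mem_Ioi] at htpos
      rw [Real.dist_eq, ← hs0, sub_zero, abs_of_pos htpos] at hts
      unfold tauP; split
      case isTrue hcond =>
        refine le_min (min_le_left _ _) ?_
        have := FMplus_le hF hτ htpos hc0 (show (0:ℝ) < η/2 by linarith)
          (show (0:ℝ) - η/2 < t by linarith) hcond.2
          (fun u hu h1 h2 => hband u hu (by rw [← hs0]; rw [abs_lt]; constructor <;> linarith))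
          (fun hpos => absurd hpos (by linarith)) (le_refl _)
        have hm := min_le_right (1:ℝ) (c/2)
        linarith
      case isFalse => exact le_trans (min_le_left _ _) (le_refl 1)
    · -- s > 0
      set η₂ := min η s / 2 with hη₂def
      have hη₂0 : 0 < η₂ := by
        have := lt_min hη0 hs0
        simp only [hη₂def]; positivity
      have hη₂η : η₂ ≤ η/2 := by
        have : min η s ≤ η := min_le_left _ _
        simp only [hη₂def]; linarith
      have hη₂s : η₂ ≤ s/2 := by
        have : min η s ≤ s := min_le_right _ _
        simp only [hη₂def]; linarith
      have hθpos : 0 < s - η₂ := by linarith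
      have he1 : 0 < F (s - η₂/2) - F (s - η₂) := by
        have := hF.2.1 (mem_Ioi.2 hθpos) (mem_Ioi.2 (show (0:ℝ) < s - η₂/2 by linarith))
          (by linarith)
        linarith
      set e1 := F (s - η₂/2) - F (s - η₂) with he1def
      refine ⟨min 1 (min (c/2) e1), lt_min one_pos (lt_min (by linarith) he1), ?_⟩
      rw [eventually_nhdsWithin_iff, Metric.eventually_nhds_iff]
      refine ⟨η₂/2, by linarith, fun t hts htpos => ?_⟩
      rw [mem_Ioi] at htpos
      rw [Real.dist_eq, abs_lt] at hts
      unfold tauP; split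
      case isTrue hcond =>
        refine le_min (min_le_left _ _) ?_
        have hθle : 0 < s - η₂ → F (s - η₂) ≤ F t - min (c/2) e1 := by
          intro _
          have hFt : F (s - η₂/2) ≤ F t := by
            apply hF.2.1.monotoneOn (mem_Ioi.2 (show (0:ℝ) < s - η₂/2 by linarith))
              (mem_Ioi.2 htpos)
            linarith
          have h2 := min_le_right (c/2) e1
          have he1eq : e1 = F (s - η₂ / 2) - F (s - η₂) := he1def
          linarith
        have hmain := FMplus_le (ε := min (c/2) e1) hF hτ htpos hc0
          (show (0:ℝ) < η₂/2 by linarith)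
          (show s - η₂ < t by linarith) hcond.2
          (fun u hu h1 h2 => hband u hu (abs_lt.mpr ⟨by linarith, by linarith⟩))
          hθle (min_le_left _ _)
        have h1 := min_le_right (1:ℝ) (min (c/2) e1)
        linarith
      case isFalse => exact le_trans (min_le_left _ _) (le_refl 1)
  -- conclude liminf ≥ ε
  rw [Filter.liminf_eq]
  refine lt_of_lt_of_le hε0 (le_csSup ?_ hεev)
  refine ⟨1, fun a ha => ?_⟩
  have ha' : ∀ᶠ n in 𝓝[Set.Ioi (0:ℝ)] s, a ≤ tauP F τ n := ha
  obtain ⟨x, hx1, hx2⟩ := (ha'.and hεev).exists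
  exact le_trans hx1 (tauP_le_one x)

lemma memUpsilon_tauP (hF : MemF F) (hτ : MemUpsilon τ) : MemUpsilon (tauP F τ) :=
  ⟨tauP_pos hF hτ, fun s hs => liminf_tauP_pos hF hτ hs⟩

end FLemmas

section BMetricLemmas

variable {X : Type*} {b : ℝ} {d : X → X → ℝ}

lemma bnd_of_compact (hb : 1 ≤ b) (hd : IsBMetric b d) {A : Set X} (hA : BSeqCompact d A)
    (x : X) : ∃ C, ∀ a ∈ A, d x a ≤ C := by
  by_contra hcon
  push_neg at hcon
  have hseq : ∀ n : ℕ, ∃ a ∈ A, (n : ℝ) < d x a := fun n => hcon n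
  choose y hyA hylt using hseq
  obtain ⟨c, hcA, φ, hφ, hconv⟩ := hA y hyA
  have hb0 : 0 < b := lt_of_lt_of_le one_pos hb
  have hev1 : ∀ᶠ n in atTop, d ((y ∘ φ) n) c ≤ 1 := by
    have := hconv.eventually (eventually_le_nhds one_pos)
    simpa using this
  obtain ⟨N, hN⟩ := (hev1.and (eventually_ge_atTop
    (Nat.ceil (b * (d x c + 1))))).exists
  have htri : d x (y (φ N)) ≤ b * (d x c + d c (y (φ N))) := hd.2.2.2 x (y (φ N)) c
  have hsym : d c (y (φ N)) = d (y (φ N)) c := hd.2.2.1 c (y (φ N))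
  have h1 : d ((y ∘ φ) N) c ≤ 1 := hN.1
  simp only [Function.comp] at h1
  have h2 : (Nat.ceil (b * (d x c + 1)) : ℝ) ≤ (N : ℝ) := by exact_mod_cast hN.2
  have h3 : b * (d x c + 1) ≤ (N : ℝ) := le_trans (Nat.le_ceil _) h2
  have h4 : (N : ℝ) ≤ (φ N : ℝ) := by exact_mod_cast hφ.le_apply
  have h5 := hylt (φ N)
  have h6 : d x (y (φ N)) ≤ b * (d x c + 1) := by
    rw [hsym] at htri
    nlinarith
  linarith

lemma mem_of_dist_le_zero (hb : 1 ≤ b) (hd : IsBMetric b d) {B : Set X}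
    (hB : BSeqCompact d B) (hBne : B.Nonempty) {a : X} (h : distPtSet d a B ≤ 0) :
    a ∈ B := by
  have hseq : ∀ n : ℕ, ∃ y ∈ B, d a y < 1 / ((n : ℝ) + 1) := by
    intro n
    have hlt : sInf (d a '' B) < 1 / ((n : ℝ) + 1) :=
      lt_of_le_of_lt h (by positivity)
    obtain ⟨v, ⟨y, hy, rfl⟩, hv⟩ := exists_lt_of_csInf_lt (hBne.image _) hlt
    exact ⟨y, hy, hv⟩
  choose y hyB hylt using hseq
  obtain ⟨c, hcB, φ, hφ, hconv⟩ := hB y hyB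
  have htend1 : Tendsto (fun n => d a (y (φ n))) atTop (𝓝 0) := by
    have hub : ∀ n : ℕ, d a (y (φ n)) ≤ 1 / ((n:ℝ) + 1) := by
      intro n
      have h1 : d a (y (φ n)) < 1 / ((φ n : ℝ) + 1) := hylt (φ n)
      have h2 : (n : ℝ) ≤ (φ n : ℝ) := by exact_mod_cast hφ.le_apply
      have h3 : 1 / ((φ n : ℝ) + 1) ≤ 1 / ((n : ℝ) + 1) := by
        apply one_div_le_one_div_of_le (by positivity) (by linarith)
      linarith
    exact tendsto_of_tendsto_of_tendsto_of_le_of_le tendsto_const_nhds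
      tendsto_one_div_add_atTop_nhds_zero_nat (fun n => hd.1 a (y (φ n))) hub
  have htend : Tendsto (fun n => b * (d a (y (φ n)) + d (y (φ n)) c)) atTop (𝓝 0) := by
    have := (htend1.add hconv).const_mul b
    simpa using this
  have hle : d a c ≤ 0 := by
    apply ge_of_tendsto htend
    filter_upwards with n
    exact hd.2.2.2 a c (y (φ n))
  have : d a c = 0 := le_antisymm hle (hd.1 a c)
  have : a = c := (hd.2.1 a c).1 this
  rw [this]; exact hcB

end BMetricLemmas

lemma contract_psiF {X : Type*} {b : ℝ} {d : X → X → ℝ} {f : X → X} {F τ : ℝ → ℝ}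
    (hd : IsBMetric b d) (hF : MemF F) (hτ : MemUpsilon τ) (hf : GenFContraction d f F τ)
    (x y : X) : d (f x) (f y) ≤ psiF F τ (d x y) := by
  rcases eq_or_lt_of_le (hd.1 (f x) (f y)) with h0 | h0
  · rw [← h0]; exact psiF_nonneg _
  · have hxy : 0 < d x y := by
      rcases eq_or_lt_of_le (hd.1 x y) with h1 | h1
      · exfalso
        have : x = y := (hd.2.1 x y).1 h1.symm
        rw [this] at h0
        have : d (f y) (f y) = 0 := (hd.2.1 (f y) (f y)).2 rfl
        linarith
      · exact h1
    have hmem : d (f x) (f y) ∈ {s | 0 < s ∧ F s ≤ F (d x y) - τ (d x y)} :=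
      ⟨h0, by linarith [hf x y h0]⟩
    apply le_csSup _ hmem
    refine ⟨d x y, ?_⟩
    intro s hs
    by_contra hsc
    push_neg at hsc
    have := hF.2.1 (mem_Ioi.2 hxy) (mem_Ioi.2 hs.1) hsc
    linarith [hs.2, hτ.1 (d x y) hxy]

/-- The induced map on compact sets of a generalized F-contraction is itself a
generalized F-contraction with respect to the Pompeiu–Hausdorff distance. -/
theorem genF_induced_on_compacts {X : Type*} (b : ℝ) (hb : 1 ≤ b)
    (d : X → X → ℝ) (hd : IsBMetric b d) (f : X → X) (F τ : ℝ → ℝ)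
    (hF : MemF F) (hτ : MemUpsilon τ) (hf : GenFContraction d f F τ) :
    ∃ τ' : ℝ → ℝ, MemUpsilon τ' ∧
      ∀ A ∈ HX d, ∀ B ∈ HX d, 0 < hausD d (f '' A) (f '' B) →
        τ' (hausD d A B) + F (hausD d (f '' A) (f '' B)) ≤ F (hausD d A B) := by
  classical
  refine ⟨tauP F τ, memUpsilon_tauP hF hτ, ?_⟩
  rintro A ⟨hAne, hAcomp⟩ B ⟨hBne, hBcomp⟩ hH'
  obtain ⟨a₀, ha₀⟩ := hAne
  obtain ⟨b₀, hb₀⟩ := hBne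
  set h := hausD d A B with hdef
  obtain ⟨CA, hCA⟩ := bnd_of_compact hb hd hAcomp a₀
  obtain ⟨CB, hCB⟩ := bnd_of_compact hb hd hBcomp b₀
  have hb0 : 0 < b := lt_of_lt_of_le one_pos hb
  have hbddBelow : ∀ (x : X) (S : Set X), BddBelow (d x '' S) := by
    intro x S
    refine ⟨0, ?_⟩
    rintro _ ⟨y, hy, rfl⟩
    exact hd.1 x y
  have hdistnn : ∀ (x : X) (S : Set X), 0 ≤ distPtSet d x S := by
    intro x S
    exact Real.sInf_nonneg (by rintro _ ⟨y, hy, rfl⟩; exact hd.1 x y)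
  have hbddA : BddAbove ((fun a => distPtSet d a B) '' A) := by
    refine ⟨b * (CA + d a₀ b₀), ?_⟩
    rintro _ ⟨a, ha, rfl⟩
    have h1 : distPtSet d a B ≤ d a b₀ := csInf_le (hbddBelow a B) ⟨b₀, hb₀, rfl⟩
    have h2 : d a b₀ ≤ b * (d a a₀ + d a₀ b₀) := hd.2.2.2 a b₀ a₀
    have h3 : d a a₀ = d a₀ a := hd.2.2.1 a a₀
    have h4 : d a₀ a ≤ CA := hCA a ha
    nlinarith
  have hbddB : BddAbove ((fun y => distPtSet d y A) '' B) := by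
    refine ⟨b * (CB + d b₀ a₀), ?_⟩
    rintro _ ⟨q, hq, rfl⟩
    have h1 : distPtSet d q A ≤ d q a₀ := csInf_le (hbddBelow q A) ⟨a₀, ha₀, rfl⟩
    have h2 : d q a₀ ≤ b * (d q b₀ + d b₀ a₀) := hd.2.2.2 q a₀ b₀
    have h3 : d q b₀ = d b₀ q := hd.2.2.1 q b₀
    have h4 : d b₀ q ≤ CB := hCB q hq
    nlinarith
  have hptB : ∀ a ∈ A, distPtSet d a B ≤ h :=
    fun a ha => le_trans (le_csSup hbddA ⟨a, ha, rfl⟩) (le_max_left _ _)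
  have hptA : ∀ q ∈ B, distPtSet d q A ≤ h :=
    fun q hq => le_trans (le_csSup hbddB ⟨q, hq, rfl⟩) (le_max_right _ _)
  have hpos : 0 < h := by
    by_contra hle
    push_neg at hle
    have hAB : A = B := by
      apply Set.Subset.antisymm
      · intro a ha
        exact mem_of_dist_le_zero hb hd hBcomp ⟨b₀, hb₀⟩ ((hptB a ha).trans hle)
      · intro q hq
        exact mem_of_dist_le_zero hb hd hAcomp ⟨a₀, ha₀⟩ ((hptA q hq).trans hle)
    have hzero : hausD d (f '' A) (f '' B) ≤ 0 := by
      rw [hAB]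
      apply max_le <;>
      · apply Real.sSup_le _ le_rfl
        rintro _ ⟨x, hx, rfl⟩
        have h1 : distPtSet d x (f '' B) ≤ d x x := csInf_le (hbddBelow x _) ⟨x, hx, rfl⟩
        have h2 : d x x = 0 := (hd.2.1 x x).2 rfl
        linarith
    linarith
  have main : ∀ (P Q : Set X), Q.Nonempty → (∀ p ∈ P, distPtSet d p Q ≤ h) →
      ∀ p ∈ P, distPtSet d (f p) (f '' Q) ≤ MplusF F τ h := by
    intro P Q hQne hPQ p hp
    refine le_csInf ⟨MFun F τ (h + 1), ⟨h + 1, mem_Ioi.2 (lt_add_one h), rfl⟩⟩ ?_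
    rintro x ⟨t', ht', rfl⟩
    rw [mem_Ioi] at ht'
    have hlt : sInf (d p '' Q) < t' := lt_of_le_of_lt (hPQ p hp) ht'
    obtain ⟨v, ⟨q, hq, rfl⟩, hvq⟩ := exists_lt_of_csInf_lt (hQne.image _) hlt
    have hmemQ : d (f p) (f q) ∈ d (f p) '' (f '' Q) := ⟨f q, ⟨q, hq, rfl⟩, rfl⟩
    have h1 : distPtSet d (f p) (f '' Q) ≤ d (f p) (f q) :=
      csInf_le (hbddBelow (f p) _) hmemQ
    rcases eq_or_lt_of_le (hd.1 p q) with h0 | h0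
    · have hpq : p = q := (hd.2.1 p q).1 h0.symm
      have h2 : d (f p) (f q) = 0 := by rw [← hpq]; exact (hd.2.1 (f p) (f p)).2 rfl
      have h3 : (0:ℝ) ≤ MFun F τ t' := MFun_nonneg hF hτ (hpos.trans ht')
      linarith
    · have h2 : d (f p) (f q) ≤ psiF F τ (d p q) := contract_psiF hd hF hτ hf p q
      have h3 : psiF F τ (d p q) ≤ MFun F τ t' := by
        have hbdd : BddAbove (psiF F τ '' Ioc 0 t') := by
          refine ⟨t', ?_⟩
          rintro _ ⟨u, hu, rfl⟩
          exact (psiF_le hF hτ hu.1).trans hu.2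
        exact le_csSup hbdd ⟨d p q, ⟨h0, hvq.le⟩, rfl⟩
      linarith
  have hA' := main A B ⟨b₀, hb₀⟩ hptB
  have hB' := main B A ⟨a₀, ha₀⟩ hptA
  have hH'le : hausD d (f '' A) (f '' B) ≤ MplusF F τ h := by
    apply max_le
    · apply Real.sSup_le _ (MplusF_nonneg hF hτ hpos)
      rintro _ ⟨_, ⟨p, hp, rfl⟩, rfl⟩
      exact hA' p hp
    · apply Real.sSup_le _ (MplusF_nonneg hF hτ hpos)
      rintro _ ⟨_, ⟨q, hq, rfl⟩, rfl⟩
      exact hB' q hq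
  have hMpos : 0 < MplusF F τ h := lt_of_lt_of_le hH' hH'le
  have htau : tauP F τ h = min 1 (F h - F (MplusF F τ h)) := by
    unfold tauP
    rw [if_pos ⟨hpos, hMpos⟩]
  have hFH' : F (hausD d (f '' A) (f '' B)) ≤ F (MplusF F τ h) :=
    hF.2.1.monotoneOn (mem_Ioi.2 hH') (mem_Ioi.2 hMpos) hH'le
  have htle : tauP F τ h ≤ F h - F (MplusF F τ h) := htau ▸ min_le_right _ _
  linarith
end

section
/- Let (X,d) be a b-metric space with constant b ≥ 1. Then the Pompeiu–Hausdorff distance H is a b-metric with the same constant b on the collection H(X) of nonempty compact subsets of X: for all A, B, C ∈ H(X) one has H(A,B) ≥ 0; H(A,B) = 0 if and only if A = B; H(A,B) = H(B,A); and H(A,C) ≤ b·(H(A,B) + H(B,C)). -/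
open Filter Topology Set

section Aux
variable {X : Type*} {b : ℝ} {d : X → X → ℝ}

lemma distPtSet_nonneg' (h0 : ∀ x y, 0 ≤ d x y) (x : X) {B : Set X} (hB : B.Nonempty) :
    0 ≤ distPtSet d x B :=
  le_csInf (hB.image _) (by rintro _ ⟨y, _, rfl⟩; exact h0 x y)

lemma distPtSet_le' (h0 : ∀ x y, 0 ≤ d x y) {x : X} {B : Set X} {y : X} (hy : y ∈ B) :
    distPtSet d x B ≤ d x y :=
  csInf_le ⟨0, by rintro _ ⟨z, _, rfl⟩; exact h0 x z⟩ ⟨y, hy, rfl⟩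

/-- A sequentially compact set is bounded from any basepoint. -/
lemma compact_bdd (hd : IsBMetric b d) {A : Set X} (hA : BSeqCompact d A) (x0 : X) :
    ∃ M : ℝ, ∀ a ∈ A, d x0 a ≤ M := by
  by_contra h
  push_neg at h
  choose f hfA hfM using fun n : ℕ => h (n : ℝ)
  obtain ⟨a, _, φ, hφ, hconv⟩ := hA f hfA
  have h1 : ∀ᶠ n in atTop, d ((f ∘ φ) n) a < 1 := hconv.eventually (gt_mem_nhds one_pos)
  obtain ⟨m, hm⟩ := exists_nat_ge (b * (d x0 a + 1))
  obtain ⟨n, hn, hn1⟩ := (h1.and (eventually_ge_atTop m)).exists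
  have hφn : (m : ℝ) ≤ (φ n : ℝ) := by exact_mod_cast hn1.trans (hφ.le_apply)
  have hlt : (↑(φ n) : ℝ) < d x0 (f (φ n)) := hfM (φ n)
  have htri : d x0 (f (φ n)) ≤ b * (d x0 a + d a (f (φ n))) := hd.2.2.2 _ _ _
  have hsymm : d a (f (φ n)) = d ((f ∘ φ) n) a := hd.2.2.1 _ _
  have hb0 : 0 ≤ b := by
    by_contra hb0
    push_neg at hb0
    have := (hd.1 x0 (f (φ n))).trans htri
    nlinarith [hd.1 x0 a, hd.1 a (f (φ n))]
  have : d x0 (f (φ n)) ≤ b * (d x0 a + 1) := by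
    refine htri.trans ?_
    have := hsymm ▸ hn.le
    nlinarith
  linarith [hm.trans hφn]

lemma bddAbove_img (hd : IsBMetric b d) {A B : Set X}
    (hA : BSeqCompact d A) {y0 : X} (hy0 : y0 ∈ B) :
    BddAbove ((fun a => distPtSet d a B) '' A) := by
  obtain ⟨M, hM⟩ := compact_bdd hd hA y0
  refine ⟨M, ?_⟩
  rintro _ ⟨a, ha, rfl⟩
  calc distPtSet d a B ≤ d a y0 := distPtSet_le' hd.1 hy0
    _ = d y0 a := hd.2.2.1 _ _
    _ ≤ M := hM a ha

/-- If the distance from `a` to a compact set `B` is zero, then `a ∈ B`. -/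
lemma mem_of_distPtSet_zero (hd : IsBMetric b d) {B : Set X}
    (hBne : B.Nonempty) (hBc : BSeqCompact d B) {a : X} (h : distPtSet d a B = 0) :
    a ∈ B := by
  have hy : ∀ n : ℕ, ∃ y ∈ B, d a y < 1 / (n + 1) := by
    intro n
    have hpos : sInf (d a '' B) < 1 / (n + 1) := by
      rw [show sInf (d a '' B) = distPtSet d a B from rfl, h]
      positivity
    obtain ⟨_, ⟨y, hyB, rfl⟩, hlt⟩ := exists_lt_of_csInf_lt (hBne.image _) hpos
    exact ⟨y, hyB, hlt⟩
  choose y hyB hylt using hy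
  obtain ⟨a', ha'B, φ, hφ, hconv⟩ := hBc y hyB
  have t1 : Tendsto (fun n => d a (y (φ n))) atTop (𝓝 0) := by
    refine squeeze_zero (g := fun n : ℕ => 1 / (n + 1 : ℝ)) (fun n => hd.1 _ _) ?_
      tendsto_one_div_add_atTop_nhds_zero_nat
    · intro n
      refine (hylt (φ n)).le.trans ?_
      have : (n : ℝ) + 1 ≤ (φ n : ℝ) + 1 := by
        have hnn : n ≤ φ n := hφ.le_apply; push_cast; linarith [(Nat.cast_le (α := ℝ)).2 hnn]
      apply one_div_le_one_div_of_le (by positivity) this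
  have t2 : Tendsto (fun n => b * (d a (y (φ n)) + d ((y ∘ φ) n) a')) atTop (𝓝 (b * (0 + 0))) :=
    (t1.add hconv).const_mul b
  rw [add_zero, mul_zero] at t2
  have hle : d a a' ≤ 0 := by
    exact ge_of_tendsto t2 (Eventually.of_forall fun n => hd.2.2.2 a a' (y (φ n)))
  have : d a a' = 0 := le_antisymm hle (hd.1 _ _)
  exact (hd.2.1 a a').1 this ▸ ha'B

/-- Key triangle-type estimate. -/
lemma distPtSet_tri (hd : IsBMetric b d) (hb : 1 ≤ b) {B C : Set X}
    (hBne : B.Nonempty) (hBc : BSeqCompact d B) (hCne : C.Nonempty) (hCc : BSeqCompact d C)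
    (a : X) :
    distPtSet d a C ≤ b * (distPtSet d a B + sSup ((fun y => distPtSet d y C) '' B)) := by
  have hb0 : (0:ℝ) < b := lt_of_lt_of_le one_pos hb
  set S := sSup ((fun y => distPtSet d y C) '' B) with hS
  -- step 1: for y ∈ B, distPtSet d a C ≤ b * (d a y + distPtSet d y C)
  have step1 : ∀ y ∈ B, distPtSet d a C ≤ b * (d a y + distPtSet d y C) := by
    intro y hyB
    have h1 : (distPtSet d a C - b * d a y) / b ≤ distPtSet d y C := by
      apply le_csInf (hCne.image _)
      rintro _ ⟨c, hc, rfl⟩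
      have h2 : distPtSet d a C ≤ d a c := distPtSet_le' hd.1 hc
      have h3 : d a c ≤ b * (d a y + d y c) := hd.2.2.2 _ _ _
      rw [div_le_iff₀ hb0]
      nlinarith
    rw [div_le_iff₀ hb0] at h1
    nlinarith
  -- step 2: bound distPtSet d y C by S
  obtain ⟨c0, hc0⟩ := hCne
  have hbdd : BddAbove ((fun y => distPtSet d y C) '' B) := bddAbove_img hd hBc hc0
  have step2 : ∀ y ∈ B, distPtSet d a C ≤ b * (d a y + S) := by
    intro y hyB
    have : distPtSet d y C ≤ S := le_csSup hbdd ⟨y, hyB, rfl⟩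
    nlinarith [step1 y hyB]
  -- step 3: take inf over y ∈ B
  have h4 : distPtSet d a C / b - S ≤ distPtSet d a B := by
    apply le_csInf (hBne.image _)
    rintro _ ⟨y, hy, rfl⟩
    have := step2 y hy
    rw [sub_le_iff_le_add, div_le_iff₀ hb0]
    nlinarith
  rw [sub_le_iff_le_add, div_le_iff₀ hb0] at h4
  nlinarith

end Aux

/-- The Pompeiu–Hausdorff distance is a b-metric (with the same constant `b`) on the
collection of nonempty compact subsets. -/
theorem hausD_is_bMetric {X : Type*} (b : ℝ) (hb : 1 ≤ b)
    (d : X → X → ℝ) (hd : IsBMetric b d) :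
    ∀ A ∈ HX d, ∀ B ∈ HX d, ∀ C ∈ HX d,
      0 ≤ hausD d A B ∧ (hausD d A B = 0 ↔ A = B) ∧ hausD d A B = hausD d B A ∧
      hausD d A C ≤ b * (hausD d A B + hausD d B C) := by
  rintro A ⟨hAne, hAc⟩ B ⟨hBne, hBc⟩ C ⟨hCne, hCc⟩
  have hb0 : (0:ℝ) < b := lt_of_lt_of_le one_pos hb
  -- nonnegativity of sups
  have sup_nonneg : ∀ (P Q : Set X), Q.Nonempty →
      0 ≤ sSup ((fun a => distPtSet d a Q) '' P) := by
    intro P Q hQ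
    apply Real.sSup_nonneg
    rintro _ ⟨a, _, rfl⟩
    exact distPtSet_nonneg' hd.1 a hQ
  have hnonneg : ∀ (P Q : Set X), P.Nonempty → Q.Nonempty → 0 ≤ hausD d P Q := by
    intro P Q hP hQ
    exact le_max_of_le_left (sup_nonneg P Q hQ)
  refine ⟨hnonneg A B hAne hBne, ?_, ?_, ?_⟩
  · constructor
    · intro h
      have h1 : sSup ((fun a => distPtSet d a B) '' A) ≤ 0 := h ▸ le_max_left _ _
      have h2 : sSup ((fun y => distPtSet d y A) '' B) ≤ 0 := h ▸ le_max_right _ _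
      obtain ⟨b0, hb0B⟩ := id hBne
      obtain ⟨a0, ha0A⟩ := id hAne
      apply Set.Subset.antisymm
      · intro a haA
        have hle : distPtSet d a B ≤ 0 :=
          (le_csSup (bddAbove_img hd hAc hb0B) ⟨a, haA, rfl⟩).trans h1
        have : distPtSet d a B = 0 :=
          le_antisymm hle (distPtSet_nonneg' hd.1 a hBne)
        exact mem_of_distPtSet_zero hd hBne hBc this
      · intro y hyB
        have hle : distPtSet d y A ≤ 0 :=
          (le_csSup (bddAbove_img hd hBc ha0A) ⟨y, hyB, rfl⟩).trans h2
        have : distPtSet d y A = 0 :=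
          le_antisymm hle (distPtSet_nonneg' hd.1 y hAne)
        exact mem_of_distPtSet_zero hd hAne hAc this
    · rintro rfl
      have himg : (fun a => distPtSet d a A) '' A = {0} := by
        apply Set.Subset.antisymm
        · rintro _ ⟨a, ha, rfl⟩
          have h1 : distPtSet d a A ≤ d a a := distPtSet_le' hd.1 ha
          have h2 : d a a = 0 := (hd.2.1 a a).2 rfl
          exact le_antisymm (h2 ▸ h1) (distPtSet_nonneg' hd.1 a hAne)
        · rintro x hx
          obtain ⟨a, ha⟩ := id hAne
          rw [hx]
          refine ⟨a, ha, ?_⟩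
          have h1 : distPtSet d a A ≤ d a a := distPtSet_le' hd.1 ha
          have h2 : d a a = 0 := (hd.2.1 a a).2 rfl
          exact le_antisymm (h2 ▸ h1) (distPtSet_nonneg' hd.1 a hAne)
      simp [hausD, himg]
  · simp [hausD, max_comm]
  · -- triangle inequality
    have key1 : ∀ a ∈ A, distPtSet d a C ≤ b * (hausD d A B + hausD d B C) := by
      intro a haA
      have h1 := distPtSet_tri hd hb hBne hBc hCne hCc a
      obtain ⟨b0, hb0B⟩ := id hBne
      have h2 : distPtSet d a B ≤ hausD d A B :=
        (le_csSup (bddAbove_img hd hAc hb0B) ⟨a, haA, rfl⟩).trans (le_max_left _ _)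
      have h3 : sSup ((fun y => distPtSet d y C) '' B) ≤ hausD d B C := le_max_left _ _
      nlinarith
    have key2 : ∀ c ∈ C, distPtSet d c A ≤ b * (hausD d A B + hausD d B C) := by
      intro c hcC
      have h1 := distPtSet_tri hd hb hBne hBc hAne hAc c
      obtain ⟨b0, hb0B⟩ := id hBne
      have h2 : distPtSet d c B ≤ hausD d B C :=
        (le_csSup (bddAbove_img hd hCc hb0B) ⟨c, hcC, rfl⟩).trans (le_max_right _ _)
      have h3 : sSup ((fun y => distPtSet d y A) '' B) ≤ hausD d A B := le_max_right _ _
      nlinarith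
    have hRnn : 0 ≤ b * (hausD d A B + hausD d B C) := by
      have := hnonneg A B hAne hBne
      have := hnonneg B C hBne hCne
      positivity
    apply max_le
    · apply Real.sSup_le _ hRnn
      rintro _ ⟨a, ha, rfl⟩
      exact key1 a ha
    · apply Real.sSup_le _ hRnn
      rintro _ ⟨c, hc, rfl⟩
      exact key2 c hc
end

section
/- Let F : (0,∞) → ℝ satisfy: (F2) for every sequence (α_n) of positive reals, α_n → 0 if and only if F(α_n) → −∞; and (F3) there exists h ∈ (0,1) with lim_{α→0⁺} α^h F(α) = 0. Let (a_m)_{m≥0} be a sequence of positive reals and c > 0 such that F(a_m) ≤ F(a_0) − m·c for all m ≥ 1. Then a_m → 0 as m → ∞, lim_{m→∞} m·(a_m)^h = 0 for the exponent h from (F3), and there exists n₁ ∈ ℕ such that a_m ≤ m^{−1/h} for all m ≥ n₁. -/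
open Filter Topology Set

/-- Quantitative consequence of (F2) and (F3): if `F(a_m) ≤ F(a_0) − m·c`, then
`a_m → 0`, `m·a_mʰ → 0`, and eventually `a_m ≤ m^(−1/h)`. -/
theorem F_decay_estimates (F : ℝ → ℝ)
    (hF2 : ∀ α : ℕ → ℝ, (∀ n, 0 < α n) →
      (Tendsto α atTop (𝓝 0) ↔ Tendsto (fun n => F (α n)) atTop atBot))
    (h : ℝ) (hh : h ∈ Set.Ioo (0:ℝ) 1)
    (hF3 : Tendsto (fun t : ℝ => t ^ h * F t) (𝓝[>] 0) (𝓝 0))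
    (a : ℕ → ℝ) (ha : ∀ m, 0 < a m) (c : ℝ) (hc : 0 < c)
    (hdec : ∀ m : ℕ, 1 ≤ m → F (a m) ≤ F (a 0) - m * c) :
    Tendsto a atTop (𝓝 0) ∧
    Tendsto (fun m : ℕ => (m : ℝ) * a m ^ h) atTop (𝓝 0) ∧
    ∃ n₁ : ℕ, ∀ m ≥ n₁, a m ≤ (m : ℝ) ^ (-(1 / h)) := by
  have hh0 : (0:ℝ) < h := hh.1
  have hne : h ≠ 0 := ne_of_gt hh0
  -- F(a m) → -∞
  have hbot : Tendsto (fun m : ℕ => F (a 0) - m * c) atTop atBot := by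
    apply tendsto_atBot_add_const_left
    have : Tendsto (fun m : ℕ => (m : ℝ) * c) atTop atTop :=
      (tendsto_natCast_atTop_atTop).atTop_mul_const hc
    simpa using tendsto_neg_atBot_iff.mpr this
  have hFa : Tendsto (fun m => F (a m)) atTop atBot := by
    apply tendsto_atBot_mono' _ _ hbot
    filter_upwards [eventually_ge_atTop 1] with m hm
    exact hdec m hm
  have h0 : Tendsto a atTop (𝓝 0) := (hF2 a ha).mpr hFa
  have hwithin : Tendsto a atTop (𝓝[>] (0:ℝ)) :=
    tendsto_nhdsWithin_of_tendsto_nhds_of_eventually_within _ h0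
      (Eventually.of_forall fun n => ha n)
  have hcomp : Tendsto (fun m => a m ^ h * F (a m)) atTop (𝓝 0) := hF3.comp hwithin
  have hpow : Tendsto (fun m => a m ^ h) atTop (𝓝 0) := by
    have hc' : ContinuousAt (fun t : ℝ => t ^ h) 0 :=
      Real.continuousAt_rpow_const 0 h (Or.inr hh0.le)
    have := hc'.tendsto.comp h0
    simpa [Real.zero_rpow hne, Function.comp_def] using this
  have hprod : Tendsto (fun m => a m ^ h * (F (a 0) - F (a m))) atTop (𝓝 0) := by
    have := (hpow.mul_const (F (a 0))).sub hcomp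
    simpa [mul_sub] using this
  -- squeeze
  have hkey : Tendsto (fun m : ℕ => (m : ℝ) * c * a m ^ h) atTop (𝓝 0) := by
    apply tendsto_of_tendsto_of_tendsto_of_le_of_le' tendsto_const_nhds hprod
    · filter_upwards with m
      have := ha m
      positivity
    · filter_upwards [eventually_ge_atTop 1] with m hm
      have h1 : (m : ℝ) * c ≤ F (a 0) - F (a m) := by
        have := hdec m hm; linarith
      have h2 : 0 ≤ a m ^ h := le_of_lt (Real.rpow_pos_of_pos (ha m) h)
      calc (m : ℝ) * c * a m ^ h ≤ (F (a 0) - F (a m)) * a m ^ h :=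
            mul_le_mul_of_nonneg_right h1 h2
        _ = a m ^ h * (F (a 0) - F (a m)) := mul_comm _ _
  have hmh : Tendsto (fun m : ℕ => (m : ℝ) * a m ^ h) atTop (𝓝 0) := by
    have := hkey.mul_const c⁻¹
    have heq : ∀ m : ℕ, (m : ℝ) * c * a m ^ h * c⁻¹ = (m : ℝ) * a m ^ h := by
      intro m; field_simp
    simpa [heq] using this
  refine ⟨h0, hmh, ?_⟩
  have hev : ∀ᶠ m : ℕ in atTop, (m : ℝ) * a m ^ h ≤ 1 :=
    (hmh.eventually (eventually_le_nhds one_pos))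
  rw [eventually_atTop] at hev
  obtain ⟨n₀, hn₀⟩ := hev
  refine ⟨max n₀ 1, fun m hm => ?_⟩
  have hm1 : 1 ≤ m := le_trans (le_max_right _ _) hm
  have hmpos : (0:ℝ) < m := by exact_mod_cast hm1
  have hle : a m ^ h ≤ (m : ℝ)⁻¹ := by
    have h1 := hn₀ m (le_trans (le_max_left _ _) hm)
    rw [← one_div]
    exact (le_div_iff₀' hmpos).mpr h1
  have hfin := Real.rpow_le_rpow (Real.rpow_pos_of_pos (ha m) h).le hle
    (by positivity : (0:ℝ) ≤ 1 / h)
  rw [← Real.rpow_mul (ha m).le, mul_one_div_cancel hne, Real.rpow_one,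
    Real.inv_rpow (Nat.cast_nonneg m), ← Real.rpow_neg (Nat.cast_nonneg m)] at hfin
  exact hfin
end
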